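/- Let G be a nonempty finite acyclic directed graph without multiple arrows and let f be a filling of G all of whose values are positive. Then the length of the integer partition GK_G(f) (the number of its nonzero parts) equals the maximal cardinality of an antichain in G. -/

import Mathlib

noncomputable section

namespace RSKPaper

/-! ### Directed graphs, paths and Greene–Kleitman invariants -/

/-- A path in the directed graph with vertex set `V` and arrow relation `A`:
a nonempty list of vertices of `V`, consecutive ones joined by arrows. -/
def IsPath {α : Type*} (V : Set α) (A : α → α → Prop) (l : List α) : Prop :=
  l ≠ [] ∧ (∀ v ∈ l, v ∈ V) ∧ l.Chain' A

/-- The `f`-weight of an `ℓ`-tuple of paths: the sum of `f` over the union of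
the supports of the paths. -/
def wt {α : Type*} [DecidableEq α] (f : α → ℕ) {ℓ : ℕ} (γ : Fin ℓ → List α) : ℕ :=
  ∑ v ∈ Finset.univ.biUnion (fun i => (γ i).toFinset), f v

/-- `MGK V A f ℓ` is `M_ℓ^G(f)`: the maximal `f`-weight of an `ℓ`-tuple of paths
in the graph `G = (V, A)` (and `0` for `ℓ = 0`). -/
def MGK {α : Type*} [DecidableEq α] (V : Set α) (A : α → α → Prop) (f : α → ℕ) (ℓ : ℕ) : ℕ :=
  sSup {w | ∃ γ : Fin ℓ → List α, (∀ i, IsPath V A (γ i)) ∧ w = wt f γ}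

/-- The Greene–Kleitman invariant, `0`-indexed: `GK V A f k` is the `(k+1)`-st
part `M_{k+1}^G(f) - M_k^G(f)` of `GK_G(f)`. -/
def GK {α : Type*} [DecidableEq α] (V : Set α) (A : α → α → Prop) (f : α → ℕ) (k : ℕ) : ℕ :=
  MGK V A f (k + 1) - MGK V A f k

/-! ### Integer partitions, Ferrers diagrams, diagonals -/

/-- `lam : ℕ → ℕ` (with `lam i` the `i`-th part for `i ≥ 1`) is an integer partition:
weakly decreasing with finitely many nonzero terms. -/
def IsPartition (lam : ℕ → ℕ) : Prop :=
  (∀ i, 1 ≤ i → lam (i + 1) ≤ lam i) ∧ ∃ N, ∀ i, N ≤ i → lam i = 0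

/-- The Ferrers diagram: pairs of positive integers `(i, j)` with `j ≤ lam i`. -/
def Fer (lam : ℕ → ℕ) : Set (ℕ × ℕ) := {p | 1 ≤ p.1 ∧ 1 ≤ p.2 ∧ p.2 ≤ lam p.1}

/-- The hook length `h_λ(1,1)` of the box `(1,1)`. -/
def hook11 (lam : ℕ → ℕ) : ℕ := {p ∈ Fer lam | p.1 = 1 ∨ p.2 = 1}.ncard

/-- The `m`-th diagonal `D_m(λ)`. -/
def diag (lam : ℕ → ℕ) (m : ℤ) : Set (ℕ × ℕ) :=
  {p ∈ Fer lam | (p.1 : ℤ) - (p.2 : ℤ) + (lam 1 : ℤ) = m}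

/-- The arrows of the graph `G_λ`. -/
def GArrow (lam : ℕ → ℕ) (p q : ℕ × ℕ) : Prop :=
  p ∈ Fer lam ∧ q ∈ Fer lam ∧ (q = (p.1 + 1, p.2) ∨ q = (p.1, p.2 + 1))

/-- The order ideal of `Fer lam` generated by `uv` (the vertex set of `G_λ(m)`
when `uv` is the maximal box of the `m`-th diagonal). -/
def ideal (lam : ℕ → ℕ) (uv : ℕ × ℕ) : Set (ℕ × ℕ) := {p ∈ Fer lam | p ≤ uv}

/-! ### Fillings and reverse plane partitions -/

/-- A filling of shape `λ`. -/
def Filling (lam : ℕ → ℕ) : Type := Fer lam → ℕ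

/-- Extend a filling of shape `λ` by zero to all of `ℕ × ℕ`. -/
def extendF (lam : ℕ → ℕ) (f : Filling lam) : ℕ × ℕ → ℕ :=
  Function.extend Subtype.val f (fun _ => 0)

/-- A reverse plane partition: a filling weakly increasing for the
componentwise order. -/
def IsRPP (lam : ℕ → ℕ) (g : Filling lam) : Prop :=
  ∀ p q : Fer lam, (p : ℕ × ℕ) ≤ (q : ℕ × ℕ) → g p ≤ g q

/-- `Φ` is the map `RSK_λ` of Gansner: for every box `p` on the `m`-th diagonal,
whose maximal box is `uv`, the value of `Φ f` at `p` is the `(u_m - i + 1)`-st part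
(1-indexed; `u_m - i` with our 0-indexed `GK`) of the Greene–Kleitman invariant of
`f` on `G_λ(m)`. -/
def IsGansnerRSK (lam : ℕ → ℕ) (Φ : Filling lam → Filling lam) : Prop :=
  ∀ (f : Filling lam) (m : ℤ) (uv : ℕ × ℕ), IsGreatest (diag lam m) uv →
    ∀ p, ∀ hp : p ∈ diag lam m,
      Φ f ⟨p, hp.1⟩ = GK (ideal lam uv) (GArrow lam) (extendF lam f) (uv.1 - p.1)

/-! ### Interval bipartitions -/

/-- `(B, E)` is an interval bipartition: disjoint subsets of the positive integers
whose union is an integer interval `{i, …, j}` with `1 ≤ i ≤ j`. -/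
def IsIntervalBipartition (B E : Finset ℕ) : Prop :=
  Disjoint B E ∧ ∃ i j, 1 ≤ i ∧ i ≤ j ∧ B ∪ E = Finset.Icc i j

/-- An interval bipartition is elementary if `1 ∈ B` and `max (B ∪ E) ∈ E`. -/
def IsElementary (B E : Finset ℕ) : Prop :=
  1 ∈ B ∧ ∃ M ∈ E, ∀ x ∈ B ∪ E, x ≤ M

/-- The `i`-th smallest element (1-indexed) of a finite set of naturals
(junk value `0` out of range). -/
def nth (B : Finset ℕ) (i : ℕ) : ℕ := (B.sort (· ≤ ·)).getD (i - 1) 0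

/-- The partition `λ(B, E)`: `λ(B,E)_i = #{e ∈ E | b_i < e}` for `1 ≤ i ≤ #B`,
and `0` otherwise. -/
def lamBE (B E : Finset ℕ) (i : ℕ) : ℕ :=
  if 1 ≤ i ∧ i ≤ B.card then (E.filter (fun e => nth B i < e)).card else 0

/-! ### Symmetric groups, Coxeter elements, Auslander–Reiten quivers -/

/-- `c` lies in the copy of `S_n` inside `Equiv.Perm ℕ` permuting `{1, …, n}`. -/
def InSymm (n : ℕ) (c : Equiv.Perm ℕ) : Prop := ∀ x, x = 0 ∨ n < x → c x = x

/-- The adjacent transposition `s_i = (i, i+1)`. -/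
def adjT (i : ℕ) : Equiv.Perm ℕ := Equiv.swap i (i + 1)

/-- A Coxeter element of `S_n`: a product of all of `s_1, …, s_{n-1}`, each
appearing exactly once, in some order. -/
def IsCoxeterElement (n : ℕ) (c : Equiv.Perm ℕ) : Prop :=
  ∃ l : List ℕ, l.Perm (List.Ico 1 n) ∧ c = (l.map adjT).prod

/-- The Coxeter length of `w ∈ S_n`: the least number of adjacent transpositions
`s_1, …, s_{n-1}` needed to express `w` as a product. -/
def lenS (n : ℕ) (w : Equiv.Perm ℕ) : ℕ :=
  sInf {k | ∃ l : List ℕ, l.length = k ∧ (∀ i ∈ l, 1 ≤ i ∧ i < n) ∧ w = (l.map adjT).prod}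

/-- `s_i` is initial in `w`, i.e. `ℓ(s_i w) < ℓ(w)`. -/
def IsInitialIn (n i : ℕ) (w : Equiv.Perm ℕ) : Prop := lenS n (adjT i * w) < lenS n w

/-- `s_i` is final in `w`, i.e. `ℓ(w s_i) < ℓ(w)`. -/
def IsFinalIn (n i : ℕ) (w : Equiv.Perm ℕ) : Prop := lenS n (w * adjT i) < lenS n w

/-- The vertices of the Auslander–Reiten quiver `AR(c)`: the transpositions
`(i, j)` with `1 ≤ i < j ≤ n`. -/
def ARVertex (n : ℕ) (p : ℕ × ℕ) : Prop := 1 ≤ p.1 ∧ p.1 < p.2 ∧ p.2 ≤ n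

/-- The arrows of `AR(c)`: `(i,j) → (i, c j)` whenever `i < c j`, and
`(i,j) → (c i, j)` whenever `c i < j`. -/
def ARArrow (n : ℕ) (c : Equiv.Perm ℕ) (p q : ℕ × ℕ) : Prop :=
  ARVertex n p ∧ ARVertex n q ∧
    ((p.1 < c p.2 ∧ q = (p.1, c p.2)) ∨ (c p.1 < p.2 ∧ q = (c p.1, p.2)))

/-- The vertex set of the full subquiver `AR_m(c)`: transpositions `(i, j)`
with `i ≤ m < j`. -/
def ARmSet (n m : ℕ) : Set (ℕ × ℕ) := {p | ARVertex n p ∧ p.1 ≤ m ∧ m < p.2}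

/-- The labelling of the box `(i, j)` of `Fer λ(B,E)` by the transposition
`(b_i, e_{q-j+1})`. -/
def boxToTransp (B E : Finset ℕ) (p : ℕ × ℕ) : ℕ × ℕ :=
  (nth B p.1, nth E (E.card - p.2 + 1))

/-- `fbar` is the filling `f̄` of `AR(c)` associated to the filling `f` of shape `λ`:
`f̄(b_i, e_{q-j+1}) = f (i, j)` for boxes `(i,j) ∈ Fer λ`, and `f̄ = 0` elsewhere. -/
def IsBarOf (lam : ℕ → ℕ) (B E : Finset ℕ) (f : Filling lam) (fbar : ℕ × ℕ → ℕ) : Prop :=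
  (∀ p : Fer lam, fbar (boxToTransp B E (p : ℕ × ℕ)) = f p) ∧
  (∀ x : ℕ × ℕ, (∀ p : Fer lam, x ≠ boxToTransp B E (p : ℕ × ℕ)) → fbar x = 0)

/-- `Φ` is the map `RSK_{λ,c}`: for every box `p` on the `m`-th diagonal of `λ`,
whose maximal box is `uv`, the value of `Φ f` at `p` is the `(u_m - i + 1)`-st part
(1-indexed; `u_m - i` with our 0-indexed `GK`) of the Greene–Kleitman invariant
of `f̄` on `AR_m(c)`. -/
def IsCoxRSK (lam : ℕ → ℕ) (B E : Finset ℕ) (n : ℕ) (c : Equiv.Perm ℕ)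
    (Φ : Filling lam → Filling lam) : Prop :=
  ∀ (f : Filling lam) (fbar : ℕ × ℕ → ℕ), IsBarOf lam B E f fbar →
    ∀ m : ℕ, 1 ≤ m → m ≤ n - 1 →
      ∀ uv : ℕ × ℕ, IsGreatest (diag lam (m : ℤ)) uv →
        ∀ p, ∀ hp : p ∈ diag lam (m : ℤ),
          Φ f ⟨p, hp.1⟩ = GK (ARmSet n m) (ARArrow n c) fbar (uv.1 - p.1)

end RSKPaper

/-!
Dilworth's theorem partitions `V` into `k` chains of the reachability order `TransGen A`, where
`k` is the largest size of an antichain, and every such chain lies on a single path. Hence for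
`ℓ ≥ k` some `ℓ` paths cover `V`, so `M_ℓ = M_{ℓ+1}` is the total weight.
For `ℓ < k` the `ℓ` paths of an optimal tuple meet a maximum antichain in at most `ℓ` vertices;
a missed vertex has positive weight, and adding it as a one-vertex path gives `M_{ℓ+1} > M_ℓ`.
-/

section StrictOrder

open Finset

variable {α : Type*} {r : α → α → Prop}

theorem Finset.exists_maximal_rel [IsStrictOrder α r] {s : Finset α} (hs : s.Nonempty) :
    ∃ a ∈ s, ∀ b ∈ s, ¬ r a b := by
  let _ := partialOrderOfSO r
  obtain ⟨a, ha, hmax⟩ := s.exists_maximal hs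
  refine ⟨a, ha, fun b hb hab => ?_⟩
  rcases hmax hb (Or.inr hab) with rfl | hba
  · exact irrefl b hab
  · exact asymm hab hba

theorem IsChain.exists_greatest_rel [IsStrictOrder α r] {s : Finset α}
    (hs : IsChain r (s : Set α)) (hne : s.Nonempty) : ∃ a ∈ s, ∀ b ∈ s, b ≠ a → r b a := by
  obtain ⟨a, ha, hmax⟩ := s.exists_maximal_rel (r := r) hne
  exact ⟨a, ha, fun b hb hba => (hs hb ha hba).resolve_right (hmax b hb)⟩

theorem IsAntichain.card_le_of_subset_biUnion [DecidableEq α] {ι : Type*} {T : Finset α}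
    (hT : IsAntichain r (T : Set α)) {s : Finset ι} {C : ι → Finset α}
    (hC : ∀ i ∈ s, IsChain r (C i : Set α)) (hTC : T ⊆ s.biUnion C) : T.card ≤ s.card :=
  calc T.card ≤ (s.biUnion fun i => T ∩ C i).card := by
        refine card_le_card fun x hx => ?_
        obtain ⟨i, hi, hxi⟩ := mem_biUnion.1 (hTC hx)
        exact mem_biUnion.2 ⟨i, hi, mem_inter.2 ⟨hx, hxi⟩⟩
    _ ≤ ∑ i ∈ s, (T ∩ C i).card := card_biUnion_le
    _ ≤ ∑ _i ∈ s, 1 := sum_le_sum fun i hi => card_le_one.2 fun x hx y hy =>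
        inter_subsingleton_of_isAntichain_of_isChain hT (hC i hi)
          (by simpa using hx) (by simpa using hy)
    _ = s.card := by simp

structure IsChainPartition (r : α → α → Prop) (S : Finset α) (m : ℕ) (c : α → ℕ) : Prop where
  lt : ∀ x ∈ S, c x < m
  isChain : ∀ i, IsChain r {x | x ∈ S ∧ c x = i}

namespace IsChainPartition

variable {S T K : Finset α} {m n : ℕ} {c : α → ℕ}

theorem mono (hc : IsChainPartition r S m c) (hmn : m ≤ n) : IsChainPartition r S n c :=
  ⟨fun x hx => (hc.lt x hx).trans_le hmn, hc.isChain⟩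

theorem ite_mem [DecidableEq α] (hc : IsChainPartition r (S \ K) m c) (hK : IsChain r (K : Set α)) :
    IsChainPartition r S (m + 1) (fun x => if x ∈ K then m else c x) := by
  refine ⟨fun x hx => ?_, fun i => ?_⟩
  · split_ifs with hxK
    · exact m.lt_succ_self
    · exact (hc.lt x (mem_sdiff.2 ⟨hx, hxK⟩)).trans m.lt_succ_self
  by_cases hi : i = m
  · refine hK.mono fun x ⟨hxS, hx⟩ => mem_coe.2 <| by_contra fun hxK => ?_
    rw [if_neg hxK] at hx
    exact (hc.lt x (mem_sdiff.2 ⟨hxS, hxK⟩)).ne (hx.trans hi)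
  · refine (hc.isChain i).mono fun x ⟨hxS, hx⟩ => ?_
    split_ifs at hx with hxK
    · exact absurd hx.symm hi
    · exact ⟨mem_sdiff.2 ⟨hxS, hxK⟩, hx⟩

theorem card_le_of_forall_mem (hc : IsChainPartition r S m c)
    (hT : IsAntichain r (T : Set α)) (hTS : T ⊆ S) {s : Finset ℕ} (hs : ∀ x ∈ T, c x ∈ s) :
    T.card ≤ s.card := by
  classical
  exact hT.card_le_of_subset_biUnion (C := fun i => S.filter (c · = i))
    (fun i _ => by simpa only [coe_filter] using hc.isChain i)
    fun x hx => mem_biUnion.2 ⟨c x, hs x hx, mem_filter.2 ⟨hTS hx, rfl⟩⟩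

theorem card_le (hc : IsChainPartition r S m c) (hT : IsAntichain r (T : Set α))
    (hTS : T ⊆ S) : T.card ≤ m := by
  simpa using hc.card_le_of_forall_mem hT hTS fun x hx => mem_range.2 (hc.lt x (hTS hx))

theorem exists_mem_of_card_eq (hc : IsChainPartition r S m c)
    (hT : IsAntichain r (T : Set α)) (hTS : T ⊆ S) (hTm : T.card = m) {i : ℕ} (hi : i < m) :
    ∃ x ∈ T, c x = i := by
  by_contra! h
  have := hc.card_le_of_forall_mem hT hTS (s := (range m).erase i) fun x hx =>
    mem_erase.2 ⟨h x hx, mem_range.2 (hc.lt x (hTS hx))⟩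
  rw [card_erase_of_mem (mem_range.2 hi), card_range] at this
  omega

/-- Galvin's tops: `x i` is the greatest element of colour `i` lying in a maximum antichain. -/
theorem exists_tops [IsStrictOrder α r] [Nonempty α] (hc : IsChainPartition r S m c)
    (hT : IsAntichain r (T : Set α)) (hTS : T ⊆ S) (hTm : T.card = m) :
    ∃ x : ℕ → α, (∀ i < m, x i ∈ S ∧ c (x i) = i) ∧ (∀ i < m, ∀ j < m, ¬ r (x i) (x j)) ∧
      ∀ U ⊆ S, IsAntichain r (U : Set α) → U.card = m → ∀ y ∈ U, y = x (c y) ∨ r y (x (c y)) := by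
  classical
  set D : ℕ → Finset α := fun i =>
    S.filter fun y => c y = i ∧ ∃ U ⊆ S, IsAntichain r (U : Set α) ∧ U.card = m ∧ y ∈ U
  have hD : ∀ i < m, ∃ z ∈ D i, ∀ y ∈ D i, y ≠ z → r y z := fun i hi => by
    refine IsChain.exists_greatest_rel ((hc.isChain i).mono fun y hy => ?_) ?_
    · have hy := mem_filter.1 (mem_coe.1 hy)
      exact ⟨hy.1, hy.2.1⟩
    · obtain ⟨y, hy, hyi⟩ := hc.exists_mem_of_card_eq hT hTS hTm hi
      exact ⟨y, mem_filter.2 ⟨hTS hy, hyi, T, hTS, hT, hTm, hy⟩⟩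
  choose! x hxD hxtop using hD
  have htop : ∀ U ⊆ S, IsAntichain r (U : Set α) → U.card = m → ∀ y ∈ U,
      y = x (c y) ∨ r y (x (c y)) := fun U hUS hU hUm y hy =>
    or_iff_not_imp_left.2 <| hxtop _ (hc.lt y (hUS hy)) y
      (mem_filter.2 ⟨hUS hy, rfl, U, hUS, hU, hUm, hy⟩)
  refine ⟨x, fun i hi => ⟨(mem_filter.1 (hxD i hi)).1, (mem_filter.1 (hxD i hi)).2.1⟩,
    fun i hi j hj hij => ?_, htop⟩
  obtain ⟨U, hUS, hU, hUm, hxU⟩ := (mem_filter.1 (hxD j hj)).2.2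
  obtain ⟨y, hyU, rfl⟩ := hc.exists_mem_of_card_eq hU hUS hUm hi
  have hyx : r y (x j) := (htop U hUS hU hUm y hyU).elim (fun h => h ▸ hij) (_root_.trans · hij)
  exact hU hyU hxU (ne_of_irrefl hyx) hyx

theorem exists_isAntichain_isChainPartition_of_forall_not_rel [DecidableEq α] {a : α} {x : ℕ → α}
    (hc : IsChainPartition r (S.erase a) m c) (haS : a ∈ S) (ha : ∀ b ∈ S, ¬ r a b)
    (hx : ∀ i < m, x i ∈ S.erase a ∧ c (x i) = i) (hxx : ∀ i < m, ∀ j < m, ¬ r (x i) (x j))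
    (hxa : ∀ i < m, ¬ r (x i) a) :
    ∃ T ⊆ S, IsAntichain r (T : Set α) ∧ ∃ c, IsChainPartition r S T.card c := by
  have hxS : ∀ i < m, x i ∈ S := fun i hi => mem_of_mem_erase (hx i hi).1
  have hxinj : Set.InjOn x (range m) := fun i hi j hj hij => by
    rw [← (hx i (mem_range.1 hi)).2, hij, (hx j (mem_range.1 hj)).2]
  have haX : a ∉ (range m).image x := by
    simp only [mem_image, mem_range, not_exists, not_and]
    exact fun i hi hxi => ne_of_mem_erase (hx i hi).1 hxi
  refine ⟨insert a ((range m).image x), insert_subset haS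
    (image_subset_iff.2 fun i hi => hxS i (mem_range.1 hi)), ?_,
    fun y => if y ∈ ({a} : Finset α) then m else c y, ?_⟩
  · rw [coe_insert, coe_image]
    refine IsAntichain.insert ?_ ?_ ?_
    · rintro _ ⟨i, hi, rfl⟩ _ ⟨j, hj, rfl⟩ -
      exact hxx i (mem_range.1 hi) j (mem_range.1 hj)
    · rintro _ ⟨i, hi, rfl⟩ -
      exact hxa i (mem_range.1 hi)
    · rintro _ ⟨i, hi, rfl⟩ -
      exact ha _ (hxS i (mem_range.1 hi))
  · rw [card_insert_of_notMem haX, card_image_of_injOn hxinj, card_range]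
    exact (sdiff_singleton_eq_erase a S ▸ hc).ite_mem (K := {a}) (by simp)

theorem exists_isAntichain_isChainPartition_of_rel [DecidableEq α] [IsStrictOrder α r] {a : α}
    {x : ℕ → α} {i : ℕ} (hc : IsChainPartition r (S.erase a) T.card c)
    (hT : IsAntichain r (T : Set α)) (hTS : T ⊆ S.erase a) (haS : a ∈ S)
    (hxtop : ∀ U ⊆ S.erase a, IsAntichain r (U : Set α) → U.card = T.card →
      ∀ y ∈ U, y = x (c y) ∨ r y (x (c y)))
    (hi : i < T.card) (hxia : r (x i) a)
    (ih : ∀ S' ⊂ S, ∃ U ⊆ S', IsAntichain r (U : Set α) ∧ ∃ d, IsChainPartition r S' U.card d) :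
    ∃ T ⊆ S, IsAntichain r (T : Set α) ∧ ∃ c, IsChainPartition r S T.card c := by
  classical
  -- `K` meets every maximum antichain of `S.erase a`, so removing it lowers the width.
  set K := insert a ((S.erase a).filter fun y => c y = i ∧ (y = x i ∨ r y (x i)))
  have hK : IsChain r (K : Set α) := by
    rw [coe_insert]
    refine IsChain.insert ((hc.isChain i).mono fun y hy => ?_) fun y hy _ => Or.inr ?_
    · have hy := mem_filter.1 (mem_coe.1 hy)
      exact ⟨hy.1, hy.2.1⟩
    · obtain ⟨-, -, rfl | hy⟩ := mem_filter.1 (mem_coe.1 hy)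
      exacts [hxia, _root_.trans hy hxia]
  have hKS : K ⊆ S := insert_subset haS ((filter_subset _ _).trans (erase_subset _ _))
  obtain ⟨U, hUS, hU, d, hd⟩ := ih _ (sdiff_ssubset hKS (insert_nonempty _ _))
  have hUS' : U ⊆ S.erase a := fun y hy => mem_erase.2
    ⟨fun h => (mem_sdiff.1 (hUS hy)).2 (h ▸ mem_insert_self _ _), (mem_sdiff.1 (hUS hy)).1⟩
  have hUT : U.card < T.card := by
    refine (hc.card_le hU hUS').lt_of_ne fun hUT => ?_
    obtain ⟨y, hyU, hyi⟩ := hc.exists_mem_of_card_eq hU hUS' hUT hi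
    refine (mem_sdiff.1 (hUS hyU)).2 (mem_insert_of_mem (mem_filter.2 ⟨hUS' hyU, hyi, ?_⟩))
    simpa [hyi] using hxtop U hUS' hU hUT y hyU
  exact ⟨T, hTS.trans (erase_subset _ _), hT, _, (hd.ite_mem hK).mono hUT⟩

end IsChainPartition

/-- **Dilworth's theorem**, by Galvin's induction. -/
theorem exists_isAntichain_isChainPartition [IsStrictOrder α r] (S : Finset α) :
    ∃ T ⊆ S, IsAntichain r (T : Set α) ∧ ∃ c, IsChainPartition r S T.card c := by
  classical
  induction S using Finset.strongInduction with | H S ih => ?_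
  rcases S.eq_empty_or_nonempty with rfl | hS
  · exact ⟨∅, subset_rfl, by simp, 0, ⟨by simp, fun i => by simp⟩⟩
  obtain ⟨a, haS, ha⟩ := S.exists_maximal_rel (r := r) hS
  have : Nonempty α := ⟨a⟩
  obtain ⟨T, hTS, hT, c, hc⟩ := ih _ (erase_ssubset haS)
  obtain ⟨x, hx, hxx, hxtop⟩ := hc.exists_tops hT hTS rfl
  by_cases hxa : ∀ i < T.card, ¬ r (x i) a
  · exact hc.exists_isAntichain_isChainPartition_of_forall_not_rel haS ha hx hxx hxa
  obtain ⟨i, hi, hxia⟩ : ∃ i < T.card, r (x i) a := by simpa using hxa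
  exact hc.exists_isAntichain_isChainPartition_of_rel hT hTS haS hxtop hi hxia ih

end StrictOrder

namespace RSKPaper

section Paths

open Finset Relation

variable {α : Type*} {V : Set α} {A : α → α → Prop}

theorem isPath_singleton {v : α} (hv : v ∈ V) : IsPath V A [v] :=
  ⟨by simp, by simpa using hv, List.isChain_singleton v⟩

theorem isPath_append_singleton (hA : ∀ p q, A p q → p ∈ V ∧ q ∈ V) {l : List α} {v : α}
    (hl : (l ++ [v]).IsChain A) (hv : v ∈ V) : IsPath V A (l ++ [v]) := by
  refine ⟨by simp, fun u hu => ?_, hl⟩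
  rcases List.mem_append.1 hu with hu | hu
  · exact hl.backwards_concat_induction (· ∈ V) l (fun x y hxy _ => (hA x y hxy).1) hv u hu
  · rwa [List.mem_singleton.1 hu]

theorem IsPath.isChain_transGen {p : List α} (hp : IsPath V A p) :
    IsChain (TransGen A) {v | v ∈ p} :=
  have : Std.Symm fun u v => TransGen A u v ∨ TransGen A v u :=
    ⟨fun _ _ => Or.symm⟩
  ((List.isChain_iff_pairwise.1 (hp.2.2.imp fun _ _ => .single)).imp Or.inl).set_pairwise

theorem exists_isChain_cons_append_of_transGen {u v : α} (h : TransGen A u v) :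
    ∃ q, (u :: q ++ [v]).IsChain A := by
  induction h using TransGen.head_induction_on with
  | single h => exact ⟨[], List.isChain_pair.2 h⟩
  | head hac _ ih =>
    obtain ⟨q, hq⟩ := ih
    exact ⟨_ :: q, hq.cons_cons hac⟩

theorem exists_isChain_append_of_forall_transGen [IsStrictOrder α (TransGen A)] (C : Finset α)
    (hC : IsChain (TransGen A) (C : Set α)) {x : α}
    (hx : ∀ y ∈ C, y ≠ x → TransGen A y x) :
    ∃ l, (l ++ [x]).IsChain A ∧ ∀ y ∈ C, y ∈ l ++ [x] := by
  classical
  induction C using Finset.strongInduction generalizing x with | H C ih => ?_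
  rcases (C.erase x).eq_empty_or_nonempty with hCx | hne
  · refine ⟨[], by simp, fun y hy => ?_⟩
    have hyx : y = x := by
      by_contra hyx
      have h := mem_erase.2 ⟨hyx, hy⟩
      simp [hCx] at h
    simp [hyx]
  obtain ⟨m, hm, hmax⟩ :=
    (hC.mono (coe_subset.2 (erase_subset x C))).exists_greatest_rel hne
  obtain ⟨l, hl, hCl⟩ := ih ((C.erase x).erase m)
    ((erase_ssubset hm).trans_subset (erase_subset x C))
    (hC.mono (coe_subset.2 ((erase_subset _ _).trans (erase_subset _ _))))
    fun y hy _ => hmax y (mem_of_mem_erase hy) (ne_of_mem_erase hy)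
  obtain ⟨q, hq⟩ := exists_isChain_cons_append_of_transGen
    (hx m (mem_of_mem_erase hm) (ne_of_mem_erase hm))
  refine ⟨l ++ m :: q, by simpa using List.isChain_split.2 ⟨hl, hq⟩, fun y hy => ?_⟩
  by_cases hyx : y = x
  · simp [hyx]
  have := hCl y
  simp only [mem_erase] at this
  simp only [List.mem_append, List.mem_cons] at this ⊢
  tauto

theorem exists_isPath_of_isChain [IsStrictOrder α (TransGen A)]
    (hA : ∀ p q, A p q → p ∈ V ∧ q ∈ V) (hV : V.Nonempty) (C : Finset α) (hCV : ↑C ⊆ V)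
    (hC : IsChain (TransGen A) (C : Set α)) : ∃ p, IsPath V A p ∧ ∀ y ∈ C, y ∈ p := by
  rcases C.eq_empty_or_nonempty with rfl | hne
  · obtain ⟨v, hv⟩ := hV
    exact ⟨[v], isPath_singleton hv, by simp⟩
  obtain ⟨m, hm, hmax⟩ := hC.exists_greatest_rel hne
  obtain ⟨l, hl, hCl⟩ := exists_isChain_append_of_forall_transGen C hC hmax
  exact ⟨l ++ [m], isPath_append_singleton hA hl (hCV hm), hCl⟩

theorem exists_notMem_of_card_lt {T : Finset α} (hT : IsAntichain (TransGen A) ↑T)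
    {γ : Fin ℓ → List α} (hγ : ∀ i, IsPath V A (γ i)) (hℓ : ℓ < T.card) :
    ∃ v ∈ T, ∀ i, v ∉ γ i := by
  classical
  by_contra! h
  have := hT.card_le_of_subset_biUnion (s := univ) (C := fun i => (γ i).toFinset)
    (fun i _ => by simpa using (hγ i).isChain_transGen) fun v hv => by
      obtain ⟨i, hi⟩ := h v hv
      exact mem_biUnion.2 ⟨i, mem_univ _, List.mem_toFinset.2 hi⟩
  simp only [card_univ, Fintype.card_fin] at this
  omega

theorem exists_isPath_cover [IsStrictOrder α (TransGen A)]
    (hA : ∀ p q, A p q → p ∈ V ∧ q ∈ V) (hV : V.Finite) (hVne : V.Nonempty) {c : α → ℕ} {m : ℕ}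
    (hc : IsChainPartition (TransGen A) hV.toFinset m c) (hmℓ : m ≤ ℓ) :
    ∃ γ : Fin ℓ → List α, (∀ i, IsPath V A (γ i)) ∧ ∀ v ∈ V, ∃ i, v ∈ γ i := by
  choose γ hγ hγC using fun i : Fin ℓ => exists_isPath_of_isChain hA hVne
    (hV.toFinset.filter (c · = i)) (fun v hv => hV.mem_toFinset.1 (mem_filter.1 hv).1)
    (by simpa only [coe_filter] using hc.isChain i)
  exact ⟨γ, hγ, fun v hv => ⟨⟨c v, (hc.lt v (hV.mem_toFinset.2 hv)).trans_le hmℓ⟩,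
    hγC _ v (mem_filter.2 ⟨hV.mem_toFinset.2 hv, rfl⟩)⟩⟩

end Paths

section Weights

open Finset

variable {α : Type*} [DecidableEq α] {V : Set α} {A : α → α → Prop} {f : α → ℕ} {ℓ : ℕ}

theorem wt_le_sum (hV : V.Finite) {γ : Fin ℓ → List α} (hγ : ∀ i, IsPath V A (γ i)) :
    wt f γ ≤ ∑ v ∈ hV.toFinset, f v :=
  sum_le_sum_of_subset fun v hv => by
    obtain ⟨i, -, hvi⟩ := mem_biUnion.1 hv
    exact hV.mem_toFinset.2 ((hγ i).2.1 v (List.mem_toFinset.1 hvi))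

theorem bddAbove_wt (hV : V.Finite) :
    BddAbove {w | ∃ γ : Fin ℓ → List α, (∀ i, IsPath V A (γ i)) ∧ w = wt f γ} :=
  ⟨_, by rintro _ ⟨γ, hγ, rfl⟩; exact wt_le_sum hV hγ⟩

theorem wt_le_MGK (hV : V.Finite) {γ : Fin ℓ → List α} (hγ : ∀ i, IsPath V A (γ i)) :
    wt f γ ≤ MGK V A f ℓ :=
  le_csSup (bddAbove_wt hV) ⟨γ, hγ, rfl⟩

theorem MGK_le_sum (hV : V.Finite) : MGK V A f ℓ ≤ ∑ v ∈ hV.toFinset, f v :=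
  csSup_le' <| by rintro _ ⟨γ, hγ, rfl⟩; exact wt_le_sum hV hγ

theorem exists_wt_eq_MGK (hV : V.Finite) (hVne : V.Nonempty) :
    ∃ γ : Fin ℓ → List α, (∀ i, IsPath V A (γ i)) ∧ MGK V A f ℓ = wt f γ := by
  obtain ⟨v, hv⟩ := hVne
  exact Nat.sSup_mem (s := {w | ∃ γ : Fin ℓ → List α, (∀ i, IsPath V A (γ i)) ∧ w = wt f γ})
    ⟨_, fun _ => [v], fun _ => isPath_singleton hv, rfl⟩ (bddAbove_wt hV)

theorem GK_eq_zero_of_forall_mem (hV : V.Finite) {γ : Fin ℓ → List α}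
    (hγ : ∀ i, IsPath V A (γ i)) (hcov : ∀ v ∈ V, ∃ i, v ∈ γ i) : GK V A f ℓ = 0 := by
  have hsum : ∑ v ∈ hV.toFinset, f v ≤ wt f γ := sum_le_sum_of_subset fun v hv => by
    obtain ⟨i, hi⟩ := hcov v (hV.mem_toFinset.1 hv)
    exact mem_biUnion.2 ⟨i, mem_univ _, List.mem_toFinset.2 hi⟩
  have hM := MGK_le_sum hV (A := A) (f := f) (ℓ := ℓ + 1)
  have hγM := wt_le_MGK hV hγ (f := f)
  unfold GK
  omega

theorem GK_pos_of_exists_notMem (hV : V.Finite) (hVne : V.Nonempty)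
    (h : ∀ γ : Fin ℓ → List α, (∀ i, IsPath V A (γ i)) → ∃ v ∈ V, 0 < f v ∧ ∀ i, v ∉ γ i) :
    0 < GK V A f ℓ := by
  obtain ⟨γ, hγ, hMγ⟩ := exists_wt_eq_MGK hV hVne (A := A) (f := f) (ℓ := ℓ)
  obtain ⟨v, hv, hfv, hvγ⟩ := h γ hγ
  set γ' : Fin (ℓ + 1) → List α := Fin.cons [v] γ
  have hγ' : ∀ i, IsPath V A (γ' i) := fun i => Fin.cases (isPath_singleton hv) hγ i
  have hwt : wt f γ' = f v + wt f γ := by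
    have hU : univ.biUnion (fun i => (γ' i).toFinset) =
        insert v (univ.biUnion fun i => (γ i).toFinset) := by
      ext u
      simp [γ', Fin.exists_fin_succ]
    rw [wt, hU, sum_insert (by simpa using hvγ)]
    rfl
  have hγ'M := wt_le_MGK hV hγ' (f := f)
  unfold GK
  omega

end Weights

/-- For a nonempty finite acyclic directed graph `G = (V, A)` without
multiple arrows and a filling `f` of `G` with positive values, the number of nonzero
parts of `GK_G(f)` is the maximal cardinality of an antichain of `G`. -/
theorem GK_length_eq_max_antichain {α : Type*} [DecidableEq α] (V : Set α)
    (A : α → α → Prop) (hVfin : V.Finite) (hVne : V.Nonempty)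
    (hA : ∀ p q, A p q → p ∈ V ∧ q ∈ V)
    (hacyclic : ∀ v, ¬ Relation.TransGen A v v)
    (f : α → ℕ) (hf : ∀ v ∈ V, 0 < f v) :
    ∃ k : ℕ,
      IsGreatest {r | ∃ S : Finset α, ↑S ⊆ V ∧
        IsAntichain (Relation.TransGen A) (S : Set α) ∧ S.card = r} k ∧
      ∀ ℓ, GK V A f ℓ ≠ 0 ↔ ℓ < k := by
  have : IsStrictOrder α (Relation.TransGen A) :=
    { irrefl := hacyclic, trans := fun _ _ _ => .trans }
  obtain ⟨T, hTV, hT, c, hc⟩ :=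
    exists_isAntichain_isChainPartition (r := Relation.TransGen A) hVfin.toFinset
  refine ⟨T.card, ⟨⟨T, fun v hv => hVfin.mem_toFinset.1 (hTV hv), hT, rfl⟩, ?_⟩,
    fun ℓ => ⟨fun hℓ => ?_, fun hℓ => ?_⟩⟩
  · rintro _ ⟨S, hSV, hS, rfl⟩
    exact hc.card_le hS fun v hv => hVfin.mem_toFinset.2 (hSV hv)
  · by_contra! hTℓ
    obtain ⟨γ, hγ, hcov⟩ := exists_isPath_cover hA hVfin hVne hc hTℓ
    exact hℓ (GK_eq_zero_of_forall_mem hVfin hγ hcov)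
  · refine (GK_pos_of_exists_notMem hVfin hVne fun γ hγ => ?_).ne'
    obtain ⟨v, hvT, hvγ⟩ := exists_notMem_of_card_lt hT hγ hℓ
    have hvV := hVfin.mem_toFinset.1 (hTV hvT)
    exact ⟨v, hvV, hf v hvV, hvγ⟩

end RSKPaper
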